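/- arXiv:2401.01120 — 3 statements merged into one kernel-verified Lean document; each statement's English description precedes it below -/
import Mathlib

section
/- Let J ⊂ ℝ be a closed interval and h ∈ C^k(J) for an integer k ≥ 1. Suppose that for every x ∈ J, max over 1 ≤ j ≤ k of |h^{(j)}(x)| ≥ 1. Then there exists ρ > 0 such that for every subinterval I ⊆ J with |I| ≤ ρ, h is (1/(2k))-non-flat on I. -/
/-!
If `h⁽ʲ⁾ ≥ 1/2` on an interval (`1 ≤ j`), then among any `2^(j+1) - 1` points of it with
mutual gaps at least `s` there are two at which `h` differs by at least `s^j / 2`: by the sign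
of `h⁽ʲ⁻¹⁾` at the middle point, `±h⁽ʲ⁻¹⁾ ≥ s/2` on the `2^j - 1` points to its right or to
its left, and one recurses on those. A set that needs `2^(εn) ≥ 2^(k+1)` balls of radius
`r = 2^(-n/(2k)) / 2` contains `2^(k+1) - 1` points with gaps larger than `r`, and
`r^j / 2 ≥ 2^(-n)` once `n ≥ 2k + 2`. Finally, uniform continuity of `h, h', …, h⁽ᵏ⁾` on `J`
gives `ρ` such that, on every subinterval of length at most `ρ`, the derivative `h⁽ʲ⁾` with
`|h⁽ʲ⁾| ≥ 1` at the left endpoint keeps its sign and stays above `1/2` in absolute value.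
-/

open Set Metric

/-- `h` is `δ`-non-flat on `J`: for all `ε > 0` there is `n₀` such that for all `n > n₀`
and every bounded `A ⊆ J`, if every cover of `A` by balls of diameter `2^{-δn}` needs at
least `2^{εn}` balls, then `diam (h '' A) ≥ 2^{-n}`. -/
def IsNonFlat (δ : ℝ) (h : ℝ → ℝ) (J : Set ℝ) : Prop :=
  ∀ ε > (0:ℝ), ∃ n₀ : ℕ, ∀ n : ℕ, n > n₀ → ∀ A : Set ℝ, A ⊆ J → Bornology.IsBounded A →
    (∀ S : Finset ℝ,
        A ⊆ ⋃ x ∈ S, Metric.closedBall x ((2:ℝ) ^ (-(δ * n)) / 2) →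
        (2:ℝ) ^ (ε * n) ≤ S.card) →
    (2:ℝ) ^ (-(n:ℝ)) ≤ Metric.diam (h '' A)

def HasIteratedDerivsOn (g : ℕ → ℝ → ℝ) (j : ℕ) (s : Set ℝ) : Prop :=
  ∀ i < j, ∀ x ∈ s, HasDerivWithinAt (g i) (g (i + 1) x) s x

namespace HasIteratedDerivsOn

variable {g : ℕ → ℝ → ℝ} {j : ℕ} {s t : Set ℝ}

theorem mono (hg : HasIteratedDerivsOn g j s) (hts : t ⊆ s) : HasIteratedDerivsOn g j t :=
  fun i hi x hx => (hg i hi x (hts hx)).mono hts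

theorem neg (hg : HasIteratedDerivsOn g j s) : HasIteratedDerivsOn (fun i x => -g i x) j s :=
  fun i hi x hx => (hg i hi x hx).neg

end HasIteratedDerivsOn

theorem ContDiffOn.hasIteratedDerivsOn {f : ℝ → ℝ} {s : Set ℝ} {k : ℕ}
    (hf : ContDiffOn ℝ k f s) (hs : UniqueDiffOn ℝ s) :
    HasIteratedDerivsOn (fun i => iteratedDerivWithin i f s) k s := fun i hi x hx => by
  show HasDerivWithinAt _ (iteratedDerivWithin (i + 1) f s x) s x
  rw [iteratedDerivWithin_succ]
  exact ((hf.differentiableOn_iteratedDerivWithin (by exact_mod_cast hi) hs) x hx).hasDerivWithinAt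

theorem mul_sub_le_sub_of_le_hasDerivWithinAt {f f' : ℝ → ℝ} {a b κ x y : ℝ}
    (hf : ∀ z ∈ Icc a b, HasDerivWithinAt f (f' z) (Icc a b) z) (hκ : ∀ z ∈ Icc a b, κ ≤ f' z)
    (hx : x ∈ Icc a b) (hy : y ∈ Icc a b) (hxy : x ≤ y) : κ * (y - x) ≤ f y - f x := by
  have hint : ∀ z ∈ interior (Icc a b), HasDerivAt f (f' z) z := fun z hz => by
    rw [interior_Icc] at hz
    exact (hf z (Ioo_subset_Icc_self hz)).hasDerivAt (Icc_mem_nhds hz.1 hz.2)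
  exact (convex_Icc a b).mul_sub_le_image_sub_of_le_deriv
    (fun z hz => (hf z hz).continuousWithinAt)
    (fun z hz => (hint z hz).differentiableAt.differentiableWithinAt)
    (fun z hz => (hint z hz).deriv ▸ hκ z (interior_subset hz)) x hx y hy hxy

theorem exists_mul_pow_le_sub_of_le_deriv {g : ℕ → ℝ → ℝ} {a b κ s : ℝ} {p : ℕ → ℝ} {j : ℕ}
    (hj : 1 ≤ j) (hg : HasIteratedDerivsOn g j (Icc a b)) (hκ : 0 ≤ κ)
    (hgj : ∀ x ∈ Icc a b, κ ≤ g j x) (hs : 0 ≤ s)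
    (hp : ∀ i < 2 ^ (j + 1) - 1, p i ∈ Icc a b)
    (hsep : ∀ i i', i < i' → i' < 2 ^ (j + 1) - 1 → p i + s ≤ p i') :
    ∃ u < 2 ^ (j + 1) - 1, ∃ v < 2 ^ (j + 1) - 1, κ * s ^ j ≤ g 0 (p u) - g 0 (p v) := by
  induction j, hj using Nat.le_induction generalizing g a b κ p with
  | base =>
    have h01 := hsep 0 1 one_pos (by norm_num)
    refine ⟨1, by norm_num, 0, by norm_num, ?_⟩
    calc κ * s ^ 1 ≤ κ * (p 1 - p 0) := by
          rw [pow_one]; exact mul_le_mul_of_nonneg_left (by linarith) hκ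
      _ ≤ _ := mul_sub_le_sub_of_le_hasDerivWithinAt (hg 0 one_pos) hgj
          (hp 0 (by norm_num)) (hp 1 (by norm_num)) (by linarith)
  | succ j hj ih =>
    set M := 2 ^ (j + 1) - 1
    have hN : 2 ^ (j + 1 + 1) - 1 = 2 * M + 1 := by
      have := Nat.one_le_two_pow (n := j + 1); rw [pow_succ]; omega
    rw [hN] at hp hsep ⊢
    have hpM := hp M (by omega)
    have hgrow := fun x y => mul_sub_le_sub_of_le_hasDerivWithinAt (x := x) (y := y)
      (hg j (lt_add_one j)) hgj
    rcases le_or_gt 0 (g j (p M)) with hpos | hneg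
    · have hsub : Icc (p M + s) b ⊆ Icc a b := Icc_subset_Icc (by linarith [hpM.1]) le_rfl
      have hbound : ∀ x ∈ Icc (p M + s) b, κ * s ≤ g j x := fun x hx => by
        have := mul_le_mul_of_nonneg_left (show s ≤ x - p M by linarith [hx.1]) hκ
        linarith [hgrow _ _ hpM (hsub hx) (by linarith [hx.1])]
      obtain ⟨u, hu, v, hv, huv⟩ := ih (p := fun i => p (M + 1 + i))
        (fun i hi => hg.mono hsub i (by omega)) (mul_nonneg hκ hs) hbound
        (fun i hi => ⟨hsep M _ (by omega) (by omega), (hp _ (by omega)).2⟩)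
        (fun i i' hii' hi' => hsep _ _ (by omega) (by omega))
      exact ⟨M + 1 + u, by omega, M + 1 + v, by omega, by rw [pow_succ]; linarith⟩
    · have hsub : Icc a (p M - s) ⊆ Icc a b := Icc_subset_Icc le_rfl (by linarith [hpM.2])
      have hbound : ∀ x ∈ Icc a (p M - s), κ * s ≤ -g j x := fun x hx => by
        have := mul_le_mul_of_nonneg_left (show s ≤ p M - x by linarith [hx.2]) hκ
        linarith [hgrow _ _ (hsub hx) hpM (by linarith [hx.2])]
      obtain ⟨u, hu, v, hv, huv⟩ := ih (p := p)
        (fun i hi => (hg.mono hsub).neg i (by omega)) (mul_nonneg hκ hs) hbound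
        (fun i hi => ⟨(hp i (by omega)).1, by linarith [hsep i M (by omega) (by omega)]⟩)
        (fun i i' hii' hi' => hsep _ _ hii' (by omega))
      exact ⟨v, by omega, u, by omega, by rw [pow_succ]; linarith⟩

theorem exists_finset_pairwise_lt_dist {X : Type*} [PseudoMetricSpace X] {A : Set X} {r : ℝ}
    {m : ℕ} (hr : 0 ≤ r) (hcov : ∀ S : Finset X, A ⊆ ⋃ x ∈ S, closedBall x r → m ≤ S.card) :
    ∃ T : Finset X, ↑T ⊆ A ∧ T.card = m ∧ (T : Set X).Pairwise fun x y => r < dist x y := by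
  classical
  induction m with
  | zero => exact ⟨∅, by simp, rfl, by simp⟩
  | succ m ih =>
    obtain ⟨T, hTA, hTm, hT⟩ := ih fun S hS => (hcov S hS).trans' m.le_succ
    obtain ⟨a, haA, ha⟩ : ∃ a ∈ A, ∀ t ∈ T, r < dist a t := by
      by_contra! hcovered
      have := hcov T fun a haA => by
        obtain ⟨t, ht, hat⟩ := hcovered a haA
        exact mem_biUnion ht (mem_closedBall.2 hat)
      omega
    have haT : a ∉ T := fun haT => by simpa [hr.not_gt] using ha a haT
    refine ⟨insert a T, ?_, by rw [Finset.card_insert_of_notMem haT, hTm], ?_⟩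
    · simpa [insert_subset_iff] using ⟨haA, hTA⟩
    · rw [Finset.coe_insert]
      exact hT.insert fun t ht _ => ⟨ha t ht, dist_comm a t ▸ ha t ht⟩

theorem exists_seq_add_le_of_forall_card_le {A : Set ℝ} {r : ℝ} {m : ℕ} (hr : 0 ≤ r)
    (hcov : ∀ S : Finset ℝ, A ⊆ ⋃ x ∈ S, closedBall x r → m ≤ S.card) :
    ∃ p : ℕ → ℝ, (∀ i < m, p i ∈ A) ∧ ∀ i i', i < i' → i' < m → p i + r ≤ p i' := by
  obtain ⟨T, hTA, hTm, hT⟩ := exists_finset_pairwise_lt_dist hr hcov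
  set e := T.orderEmbOfFin hTm
  refine ⟨fun i => if hi : i < m then e ⟨i, hi⟩ else 0, fun i hi => ?_, fun i i' hii' hi' => ?_⟩
  · simpa [hi] using hTA (T.orderEmbOfFin_mem hTm _)
  · have hlt : e ⟨i, hii'.trans hi'⟩ < e ⟨i', hi'⟩ := e.strictMono hii'
    have := hT (T.orderEmbOfFin_mem hTm _) (T.orderEmbOfFin_mem hTm _) hlt.ne
    dsimp only at this
    rw [Real.dist_eq, abs_of_neg (sub_neg.2 hlt)] at this
    simp only [hii'.trans hi', hi', dite_true]
    linarith

theorem IsCompact.exists_pos_forall_dist_lt {X Y : Type*} [PseudoMetricSpace X]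
    [PseudoMetricSpace Y] {K : Set X} (hK : IsCompact K) {g : ℕ → X → Y} {k : ℕ}
    (hg : ∀ j ≤ k, ContinuousOn (g j) K) {η : ℝ} (hη : 0 < η) :
    ∃ ρ > 0, ∀ j ≤ k, ∀ x ∈ K, ∀ y ∈ K, dist x y < ρ → dist (g j x) (g j y) < η := by
  have hG : ContinuousOn (fun x (j : Fin (k + 1)) => g j x) K :=
    continuousOn_pi.2 fun j => hg j (Nat.lt_succ_iff.1 j.2)
  obtain ⟨ρ, hρ, hG⟩ := Metric.uniformContinuousOn_iff.1
    (hK.uniformContinuousOn_of_continuous hG) η hη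
  exact ⟨ρ, hρ, fun j hj x hx y hy hxy =>
    (dist_le_pi_dist _ _ (⟨j, Nat.lt_succ_of_le hj⟩ : Fin (k + 1))).trans_lt (hG x hx y hy hxy)⟩

theorem continuousOn_iteratedDerivWithin_Icc {f : ℝ → ℝ} {a b : ℝ} {k j : ℕ}
    (hf : ContDiffOn ℝ k f (Icc a b)) (hj : j ≤ k) :
    ContinuousOn (iteratedDerivWithin j f (Icc a b)) (Icc a b) := by
  rcases lt_or_ge a b with hab | hba
  · exact hf.continuousOn_iteratedDerivWithin (by exact_mod_cast hj) (uniqueDiffOn_Icc hab)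
  · exact (subsingleton_Icc_of_ge hba).continuousOn _

theorem IsNonFlat.of_neg {δ : ℝ} {h : ℝ → ℝ} {J : Set ℝ} (hh : IsNonFlat δ (fun x => -h x) J) :
    IsNonFlat δ h J := fun ε hε => by
  obtain ⟨n₀, hn₀⟩ := hh ε hε
  refine ⟨n₀, fun n hn A hA hAb hcov => ?_⟩
  have := hn₀ n hn A hA hAb hcov
  rwa [← image_image (fun y => -y) h, isometry_neg.diam_image] at this

theorem isNonFlat_of_subsingleton {δ : ℝ} {h : ℝ → ℝ} {J : Set ℝ} (hJ : J.Subsingleton) :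
    IsNonFlat δ h J := fun ε hε => by
  refine ⟨0, fun n hn A hA _ hcov => ?_⟩
  obtain ⟨x, hx⟩ : ∃ x, A ⊆ {x} := by
    rcases (hJ.anti hA).eq_empty_or_singleton with rfl | ⟨x, rfl⟩
    exacts [⟨0, empty_subset _⟩, ⟨x, subset_rfl⟩]
  have hone := hcov {x} fun y hy => mem_biUnion (Finset.mem_singleton_self x)
    ((hx hy : y = x) ▸ mem_closedBall_self (by positivity))
  have : (1 : ℝ) < 2 ^ (ε * n) :=
    Real.one_lt_rpow one_lt_two (mul_pos hε (Nat.cast_pos.2 hn))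
  rw [Finset.card_singleton, Nat.cast_one] at hone
  linarith

theorem two_rpow_neg_le_half_mul_pow {k j n : ℕ} (hjk : j ≤ k) (hn : 2 * k + 2 ≤ n) :
    (2 : ℝ) ^ (-(n : ℝ)) ≤ 1 / 2 * ((2 : ℝ) ^ (-(1 / (2 * k) * n : ℝ)) / 2) ^ j := by
  have hrhs : 1 / 2 * ((2 : ℝ) ^ (-(1 / (2 * k) * n : ℝ)) / 2) ^ j =
      (2 : ℝ) ^ (-1 + (-(1 / (2 * k) * n) - 1) * j : ℝ) := by
    rw [Real.rpow_add two_pos, Real.rpow_mul_natCast two_pos.le, Real.rpow_sub_one two_ne_zero,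
      Real.rpow_neg_one, one_div]
  rw [hrhs]
  refine Real.rpow_le_rpow_of_exponent_le one_le_two ?_
  have hjk' : (j : ℝ) ≤ k := by exact_mod_cast hjk
  have hn' : 2 * (k : ℝ) + 2 ≤ n := by exact_mod_cast hn
  have : 1 / (2 * k) * n * j ≤ (n / 2 : ℝ) := by
    rcases (Nat.zero_le k).eq_or_lt with rfl | hk
    · simp only [CharP.cast_eq_zero, mul_zero, div_zero, zero_mul]; positivity
    · rw [div_mul_eq_mul_div, one_mul, div_mul_eq_mul_div, div_le_div_iff₀ (by positivity) two_pos]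
      nlinarith
  nlinarith

theorem isNonFlat_of_half_le_iteratedDeriv {g : ℕ → ℝ → ℝ} {c d : ℝ} {j k : ℕ}
    (hg : HasIteratedDerivsOn g k (Icc c d)) (hj : 1 ≤ j) (hjk : j ≤ k)
    (hgj : ∀ x ∈ Icc c d, 1 / 2 ≤ g j x) : IsNonFlat (1 / (2 * k)) (g 0) (Icc c d) := by
  intro ε hε
  refine ⟨max (2 * k + 2) ⌈(k + 1) / ε⌉₊, fun n hn A hA _ hcov => ?_⟩
  rw [gt_iff_lt, max_lt_iff] at hn
  have hεn : (k + 1 : ℝ) ≤ ε * n := by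
    have := Nat.lt_of_ceil_lt hn.2
    rw [div_lt_iff₀ hε] at this
    linarith
  set r : ℝ := (2 : ℝ) ^ (-(1 / (2 * k) * n : ℝ)) / 2
  have hcount : ∀ S : Finset ℝ, A ⊆ ⋃ x ∈ S, closedBall x r → 2 ^ (j + 1) - 1 ≤ S.card :=
    fun S hS => by
      have : ((2 ^ (j + 1) - 1 : ℕ) : ℝ) ≤ 2 ^ (ε * n) := calc
        _ ≤ (2 : ℝ) ^ ((j + 1 : ℕ) : ℝ) := by
          rw [Real.rpow_natCast, Nat.cast_sub Nat.one_le_two_pow]; push_cast; linarith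
        _ ≤ 2 ^ (ε * n) := Real.rpow_le_rpow_of_exponent_le one_le_two
          (by push_cast; linarith [show (j : ℝ) ≤ k by exact_mod_cast hjk])
      exact_mod_cast this.trans (hcov S hS)
  obtain ⟨p, hpA, hpsep⟩ := exists_seq_add_le_of_forall_card_le (by positivity) hcount
  obtain ⟨u, hu, v, hv, huv⟩ := exists_mul_pow_le_sub_of_le_deriv hj
    (fun i hi => hg i (hi.trans_le hjk)) (by norm_num) hgj (by positivity)
    (fun i hi => hA (hpA i hi)) hpsep
  have hbdd : Bornology.IsBounded (g 0 '' A) :=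
    (isCompact_Icc.image_of_continuousOn fun x hx =>
      (hg 0 (by omega) x hx).continuousWithinAt).isBounded.subset (image_mono hA)
  calc (2 : ℝ) ^ (-(n : ℝ)) ≤ 1 / 2 * r ^ j := two_rpow_neg_le_half_mul_pow hjk hn.1.le
    _ ≤ g 0 (p u) - g 0 (p v) := huv
    _ ≤ dist (g 0 (p u)) (g 0 (p v)) := (le_abs_self _).trans (Real.dist_eq _ _).ge
    _ ≤ diam (g 0 '' A) :=
      dist_le_diam_of_mem hbdd (mem_image_of_mem _ (hpA u hu)) (mem_image_of_mem _ (hpA v hv))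

theorem stmt2_general (A B : ℝ) (k : ℕ) (h : ℝ → ℝ)
    (hsmooth : ContDiffOn ℝ k h (Set.Icc A B))
    (hbig : ∀ x ∈ Set.Icc A B, ∃ j : ℕ, 1 ≤ j ∧ j ≤ k ∧
      1 ≤ |iteratedDerivWithin j h (Set.Icc A B) x|) :
    ∃ ρ > (0:ℝ), ∀ c d : ℝ, Set.Icc c d ⊆ Set.Icc A B → d - c ≤ ρ →
      IsNonFlat (1 / (2 * k)) h (Set.Icc c d) := by
  set g : ℕ → ℝ → ℝ := fun i => iteratedDerivWithin i h (Icc A B)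
  obtain ⟨ρ, hρ, hclose⟩ := isCompact_Icc.exists_pos_forall_dist_lt (g := g)
    (fun j hj => continuousOn_iteratedDerivWithin_Icc hsmooth hj) (half_pos one_pos)
  refine ⟨ρ / 2, half_pos hρ, fun c d hcd hlen => ?_⟩
  rcases le_or_gt d c with hdc | hlt
  · exact isNonFlat_of_subsingleton (subsingleton_Icc_of_ge hdc)
  have hc : c ∈ Icc A B := hcd (left_mem_Icc.2 hlt.le)
  have hd : d ∈ Icc A B := hcd (right_mem_Icc.2 hlt.le)
  have hderiv : HasIteratedDerivsOn g k (Icc c d) :=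
    (hsmooth.hasIteratedDerivsOn (uniqueDiffOn_Icc (by linarith [hc.1, hd.2]))).mono hcd
  obtain ⟨j, hj, hjk, hgc⟩ := hbig c hc
  have hnear : ∀ x ∈ Icc c d, |g j x - g j c| < 1 / 2 := fun x hx =>
    hclose j hjk x (hcd hx) c hc (by rw [Real.dist_eq, abs_of_nonneg] <;> linarith [hx.1, hx.2])
  have hg0 : g 0 = h := iteratedDerivWithin_zero
  rcases le_abs'.1 hgc with hneg | hpos
  · have := isNonFlat_of_half_le_iteratedDeriv hderiv.neg hj hjk fun x hx => by
      linarith [(abs_lt.1 (hnear x hx)).2]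
    rw [hg0] at this
    exact this.of_neg
  · have := isNonFlat_of_half_le_iteratedDeriv hderiv hj hjk fun x hx => by
      linarith [(abs_lt.1 (hnear x hx)).1]
    rwa [hg0] at this

/-- If `h ∈ C^k(J)` and at every point of `J` some derivative of order `1 ≤ j ≤ k` has
absolute value at least `1`, then there is `ρ > 0` such that `h` is `1/(2k)`-non-flat on
every subinterval of `J` of length at most `ρ`. -/
theorem stmt2 (A B : ℝ) (hAB : A ≤ B) (k : ℕ) (hk : 1 ≤ k) (h : ℝ → ℝ)
    (hsmooth : ContDiffOn ℝ k h (Set.Icc A B))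
    (hbig : ∀ x ∈ Set.Icc A B, ∃ j : ℕ, 1 ≤ j ∧ j ≤ k ∧
      1 ≤ |iteratedDerivWithin j h (Set.Icc A B) x|) :
    ∃ ρ > (0:ℝ), ∀ c d : ℝ, Set.Icc c d ⊆ Set.Icc A B → d - c ≤ ρ →
      IsNonFlat (1 / (2 * k)) h (Set.Icc c d) :=
  stmt2_general A B k h hsmooth hbig
end

section
/- Let J ⊆ ℝ be a compact interval and g : J → ℝ a real analytic function that is not affine (i.e., not of the form x ↦ c₁x + c₂ on J). Then there exist c > 0 and an integer k ≥ 2 such that for all x ∈ J, max over 2 ≤ j ≤ k of |g^{(j)}(x)| ≥ c. -/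
/-!
If all derivatives of order `≥ 2` of `g` vanished at some `x₀`, then `g''` would be analytic
with vanishing Taylor series at `x₀`, hence zero on the whole interval, and `g` would be affine.
So at every point some `g^{(j)}`, `j ≥ 2`, is nonzero. The sets where `max_{j ≤ k} |g^{(j)}|` is
positive form an increasing open cover of the compact interval, so one `k` works everywhere, and
this continuous positive maximum has a positive minimum `c`.
-/

open Topology Set

lemma exists_pos_le_abs_of_forall_exists_ne_zero {X : Type*} [TopologicalSpace X]
    [CompactSpace X] {F : ℕ → X → ℝ} (hF : ∀ j, Continuous (F j)) (h : ∀ x, ∃ j, F j x ≠ 0) :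
    ∃ c > 0, ∃ k, ∀ x, ∃ j ≤ k, c ≤ |F j x| := by
  let M : ℕ → X → ℝ := fun k x ↦
    (Finset.range (k + 1)).sup' Finset.nonempty_range_add_one fun j ↦ |F j x|
  have hM : ∀ k, Continuous (M k) := fun k ↦
    Continuous.finset_sup'_apply _ fun j _ ↦ (hF j).abs
  have hmono : Monotone fun k ↦ {x | 0 < M k x} := by
    intro k l hkl x (hx : 0 < M k x)
    exact hx.trans_le (Finset.sup'_mono _ (Finset.range_subset_range.2 (by omega)) _)
  have hcover : (univ : Set X) ⊆ ⋃ k, {x | 0 < M k x} := by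
    intro x _
    obtain ⟨j, hj⟩ := h x
    exact mem_iUnion.2 ⟨j, (abs_pos.2 hj).trans_le
      (Finset.le_sup' (fun i ↦ |F i x|) (Finset.self_mem_range_succ j))⟩
  obtain ⟨k, hk⟩ := isCompact_univ.elim_directed_cover _
    (fun k ↦ isOpen_lt continuous_const (hM k)) hcover hmono.directed_le
  obtain ⟨c, hc, hcM⟩ := isCompact_univ.exists_forall_le' (hM k).continuousOn
    fun x _ ↦ hk (mem_univ x)
  refine ⟨c, hc, k, fun x ↦ ?_⟩
  obtain ⟨j, hj, hcj⟩ := (Finset.le_sup'_iff _).1 (hcM x (mem_univ x))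
  exact ⟨j, Nat.lt_succ_iff.1 (Finset.mem_range.1 hj), hcj⟩

lemma IsCompact.exists_pos_le_abs_of_forall_exists_ne_zero {X : Type*} [TopologicalSpace X]
    {K : Set X} (hK : IsCompact K) {F : ℕ → X → ℝ} (hF : ∀ j, ContinuousOn (F j) K)
    (h : ∀ x ∈ K, ∃ j, F j x ≠ 0) :
    ∃ c > 0, ∃ k, ∀ x ∈ K, ∃ j ≤ k, c ≤ |F j x| := by
  have := isCompact_iff_compactSpace.1 hK
  obtain ⟨c, hc, k, hk⟩ := _root_.exists_pos_le_abs_of_forall_exists_ne_zero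
    (F := fun j (x : K) ↦ F j x) (fun j ↦ (hF j).domRestrict) fun x ↦ h x x.2
  exact ⟨c, hc, k, fun x hx ↦ hk ⟨x, hx⟩⟩

lemma AnalyticAt.eventuallyEq_zero_of_iteratedDeriv_eq_zero {𝕜 E : Type*}
    [NontriviallyNormedField 𝕜] [CharZero 𝕜] [NormedAddCommGroup E] [NormedSpace 𝕜 E]
    [CompleteSpace E] {f : 𝕜 → E} {z₀ : 𝕜} (hf : AnalyticAt 𝕜 f z₀)
    (h : ∀ n, iteratedDeriv n f z₀ = 0) : f =ᶠ[𝓝 z₀] 0 :=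
  analyticOrderAt_eq_top.1 <| ENat.eq_top_iff_forall_ge.2 fun _ ↦
    (natCast_le_analyticOrderAt_iff_iteratedDeriv_eq_zero hf).2 fun i _ ↦ h i

lemma exists_affine_of_deriv_deriv_eq_zero {a b : ℝ} {g : ℝ → ℝ}
    (hg : ∀ x ∈ Icc a b, DifferentiableAt ℝ g x)
    (hg' : ∀ x ∈ Icc a b, DifferentiableAt ℝ (deriv g) x)
    (hg'' : ∀ x ∈ Icc a b, deriv (deriv g) x = 0) :
    ∀ x ∈ Icc a b, g x = deriv g a * (x - a) + g a := by
  have hconst : ∀ x ∈ Icc a b, deriv g x = deriv g a :=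
    constant_of_has_deriv_right_zero (fun x hx ↦ (hg' x hx).continuousAt.continuousWithinAt)
      fun x hx ↦ (hg'' x (Ico_subset_Icc_self hx) ▸
        (hg' x (Ico_subset_Icc_self hx)).hasDerivAt).hasDerivWithinAt
  refine eq_of_has_deriv_right_eq (f' := fun _ ↦ deriv g a) (fun x hx ↦ ?_) (fun x _ ↦ ?_)
    (fun x hx ↦ (hg x hx).continuousAt.continuousWithinAt) (by fun_prop) (by simp)
  · exact (hconst x (Ico_subset_Icc_self hx) ▸
      (hg x (Ico_subset_Icc_self hx)).hasDerivAt).hasDerivWithinAt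
  · simpa using (((hasDerivAt_id x).sub_const a).const_mul (deriv g a)).add_const (g a)
      |>.hasDerivWithinAt

lemma AnalyticOnNhd.exists_affine_of_iteratedDeriv_eq_zero {a b x₀ : ℝ} {g : ℝ → ℝ}
    (hg : AnalyticOnNhd ℝ g (Icc a b)) (hx₀ : x₀ ∈ Icc a b)
    (h : ∀ n, iteratedDeriv (n + 2) g x₀ = 0) :
    ∃ c₁ c₂ : ℝ, ∀ x ∈ Icc a b, g x = c₁ * x + c₂ := by
  have hg2 : EqOn (deriv^[2] g) 0 (Icc a b) :=
    (hg.iterated_deriv 2).eqOn_zero_of_preconnected_of_eventuallyEq_zero isPreconnected_Icc hx₀ <|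
      (hg.iterated_deriv 2 x₀ hx₀).eventuallyEq_zero_of_iteratedDeriv_eq_zero fun n ↦ by
        rw [iteratedDeriv_eq_iterate, ← Function.iterate_add_apply, ← iteratedDeriv_eq_iterate,
          h n]
  have haff := exists_affine_of_deriv_deriv_eq_zero (fun x hx ↦ (hg x hx).differentiableAt)
    (fun x hx ↦ (hg x hx).deriv.differentiableAt) hg2
  exact ⟨deriv g a, g a - deriv g a * a, fun x hx ↦ by rw [haff x hx]; ring⟩

theorem stmt3_general (A B : ℝ) (g : ℝ → ℝ)
    (hg : AnalyticOnNhd ℝ g (Set.Icc A B))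
    (hnonaffine : ¬ ∃ c₁ c₂ : ℝ, ∀ x ∈ Set.Icc A B, g x = c₁ * x + c₂) :
    ∃ c > (0:ℝ), ∃ k : ℕ, 2 ≤ k ∧ ∀ x ∈ Set.Icc A B,
      ∃ j : ℕ, 2 ≤ j ∧ j ≤ k ∧ c ≤ |iteratedDeriv j g x| := by
  have hne : ∀ x ∈ Icc A B, ∃ j, iteratedDeriv (j + 2) g x ≠ 0 := by
    intro x₀ hx₀
    by_contra! hzero
    exact hnonaffine (hg.exists_affine_of_iteratedDeriv_eq_zero hx₀ hzero)
  have hcont : ∀ j, ContinuousOn (iteratedDeriv (j + 2) g) (Icc A B) := fun j ↦ by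
    simpa only [iteratedDeriv_eq_iterate] using (hg.iterated_deriv (j + 2)).continuousOn
  obtain ⟨c, hc, k, hk⟩ := isCompact_Icc.exists_pos_le_abs_of_forall_exists_ne_zero hcont hne
  refine ⟨c, hc, k + 2, by omega, fun x hx ↦ ?_⟩
  obtain ⟨j, hjk, hcj⟩ := hk x hx
  exact ⟨j + 2, by omega, by omega, hcj⟩

/-- A non-affine real analytic function on a compact interval has, for some `c > 0` and
`k ≥ 2`, at every point a derivative of order `2 ≤ j ≤ k` of absolute value at least `c`. -/
theorem stmt3 (A B : ℝ) (hAB : A ≤ B) (g : ℝ → ℝ)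
    (hg : AnalyticOnNhd ℝ g (Set.Icc A B))
    (hnonaffine : ¬ ∃ c₁ c₂ : ℝ, ∀ x ∈ Set.Icc A B, g x = c₁ * x + c₂) :
    ∃ c > (0:ℝ), ∃ k : ℕ, 2 ≤ k ∧ ∀ x ∈ Set.Icc A B,
      ∃ j : ℕ, 2 ≤ j ∧ j ≤ k ∧ c ≤ |iteratedDeriv j g x| :=
  stmt3_general A B g hg hnonaffine
end

section
/- Fix an integer k ≥ 2 and reals 1 < a < b. Let m ≥ 1 and let P(x) = Σ_{j=0}^m l_j x^j be a real polynomial with deg(P) = m, |l_m| ≥ 1, and at most k nonzero coefficients. Then for any q > 2(1 + log_a 2 + log_a 3), there exist at most 2k + 2 subintervals I_i ⊂ [a,b], each of length |I_i| ≤ a^{−mq}, such that |P(x)| ≥ a^{−(mq)²} for all x ∈ [a,b] \ ∪_i I_i. -/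
/-!
On every interval of length `δ = a^(-mq)` the polynomial `P` takes a value of absolute value at
least `(δ / 2m)^m ≥ a^(-(mq)²) =: ε`: otherwise its `m`-th forward difference with step `δ / m`,
which equals `m! (δ / m)^m l_m`, would be smaller than `(δ / m)^m`. Hence if `|P x| < ε` at some
`x > a + δ`, the intermediate value theorem on `[x - δ, x]` produces `c` with `|P c| = ε`, a
positive root of `P ∓ ε`. By Descartes' rule of signs each of these polynomials, having at most
`k + 1` nonzero coefficients, has at most `k` positive roots, so `[a, a + δ]` together with the
intervals `[c, c + δ]` covers every small value of `P` on `[a, b]`.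
-/

open Polynomial Finset fwdDiff Nat

theorem norm_fwdDiff_iter_lt {M G : Type*} [AddCommMonoid M] [SeminormedAddCommGroup G]
    {f : M → G} {h y : M} {n : ℕ} {C : ℝ} (hf : ∀ k ≤ n, ‖f (y + k • h)‖ < C) :
    ‖Δ_[h] ^[n] f y‖ < 2 ^ n * C := by
  rw [fwdDiff_iter_eq_sum_shift]
  calc ‖∑ k ∈ range (n + 1), ((-1 : ℤ) ^ (n - k) * n.choose k) • f (y + k • h)‖
      ≤ ∑ k ∈ range (n + 1), ‖((-1 : ℤ) ^ (n - k) * n.choose k) • f (y + k • h)‖ :=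
        norm_sum_le _ _
    _ < ∑ k ∈ range (n + 1), (n.choose k : ℝ) * C := by
        refine sum_lt_sum_of_nonempty nonempty_range_add_one fun k hk => ?_
        have hkn : k ≤ n := Nat.lt_succ_iff.mp (mem_range.mp hk)
        grw [norm_zsmul_le]
        simp only [norm_mul, norm_pow, norm_neg, norm_one, one_pow, one_mul, Int.norm_natCast]
        exact mul_lt_mul_of_pos_left (hf k hkn) (by exact_mod_cast n.choose_pos hkn)
    _ = 2 ^ n * C := by
        rw [← sum_mul, ← Nat.cast_sum, Nat.sum_range_choose, Nat.cast_pow, Nat.cast_ofNat]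

namespace Polynomial

theorem signVariations_lt_card_support {R : Type*} [Semiring R] [LinearOrder R] (P : R[X])
    (hP : P ≠ 0) : P.signVariations < P.support.card := by
  by_cases hE : P.eraseLead = 0
  · have hmono : P = monomial P.natDegree P.leadingCoeff := by
      simpa [hE] using (eraseLead_add_monomial_natDegree_leadingCoeff P).symm
    rw [hmono, signVariations_monomial, ← hmono]
    exact card_pos.2 (support_nonempty.2 hP)
  · have ih := signVariations_lt_card_support P.eraseLead hE
    have hcard := card_support_eraseLead_add_one hP
    have hstep := signVariations_le_eraseLead_succ P
    omega
termination_by P.support.card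
decreasing_by rw [← card_support_eraseLead_add_one hP]; omega

section OrderedRing

variable {R : Type*} [CommRing R] [LinearOrder R] [IsStrictOrderedRing R] [DecidableEq R]

theorem card_pos_roots_lt_card_support {P : R[X]} (hP : P ≠ 0) :
    (P.roots.toFinset.filter (0 < ·)).card < P.support.card := by
  calc (P.roots.toFinset.filter (0 < ·)).card = (P.roots.filter (0 < ·)).toFinset.card := by
        rw [Multiset.toFinset_filter]
    _ ≤ P.roots.countP (0 < ·) := by
        rw [Multiset.countP_eq_card_filter]; exact Multiset.toFinset_card_le _
    _ ≤ P.signVariations := roots_countP_pos_le_signVariations P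
    _ < P.support.card := signVariations_lt_card_support P hP

theorem card_pos_roots_add_C_le {P : R[X]} {c : R} (hP : P + C c ≠ 0) :
    ((P + C c).roots.toFinset.filter (0 < ·)).card ≤ P.support.card := by
  have hsupp : (P + C c).support.card ≤ P.support.card + 1 :=
    calc (P + C c).support.card ≤ (P.support ∪ (C c).support).card := card_le_card support_add
      _ ≤ P.support.card + (C c).support.card := card_union_le _ _
      _ ≤ P.support.card + 1 := by grw [card_le_card (support_C_subset c), card_singleton]
  have := card_pos_roots_lt_card_support hP
  omega

end OrderedRing

theorem fwdDiff_iter_natDegree_eval {R : Type*} [CommRing R] [IsDomain R] (P : R[X]) {h : R}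
    (hh : h ≠ 0) (c : R) :
    Δ_[h] ^[P.natDegree] P.eval c = P.natDegree ! * h ^ P.natDegree * P.leadingCoeff := by
  set Q := P.comp (C h * X + C c)
  have hQ : Q.natDegree = P.natDegree := by
    simp [Q, natDegree_comp, natDegree_linear hh]
  have hQlead : Q.leadingCoeff = P.leadingCoeff * h ^ P.natDegree := by
    rw [leadingCoeff_comp (by simp [natDegree_linear hh]), leadingCoeff_linear hh]
  have hshift : Δ_[h] ^[P.natDegree] P.eval c = Δ_[1] ^[P.natDegree] Q.eval 0 := by
    simp only [fwdDiff_iter_eq_sum_shift, Q, eval_comp]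
    refine sum_congr rfl fun k _ => ?_
    rw [nsmul_eq_mul, nsmul_eq_mul, mul_one, zero_add]
    simp only [eval_add, eval_mul, eval_C, eval_X]
    ring_nf
  rw [hshift, ← hQ, Q.fwdDiff_iter_degree_eq_factorial, hQlead, hQ]
  simp
  ring

theorem exists_mem_Icc_pow_le_abs_eval {P : ℝ[X]} (hdeg : 0 < P.natDegree)
    (hlead : 1 ≤ |P.leadingCoeff|) (c : ℝ) {δ : ℝ} (hδ : 0 < δ) :
    ∃ y ∈ Set.Icc c (c + δ), (δ / (2 * P.natDegree)) ^ P.natDegree ≤ |P.eval y| := by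
  set n := P.natDegree
  set h := δ / n
  have hn : (0 : ℝ) < n := by exact_mod_cast hdeg
  have hh : 0 < h := div_pos hδ hn
  have hhalf : δ / (2 * n) = h / 2 := by ring
  by_contra! hsmall
  have hupper : ‖Δ_[h] ^[n] P.eval c‖ < 2 ^ n * (h / 2) ^ n := by
    refine norm_fwdDiff_iter_lt fun k hk => ?_
    rw [← hhalf, nsmul_eq_mul, Real.norm_eq_abs]
    refine hsmall _ ⟨by nlinarith, ?_⟩
    have hkh : (k : ℝ) * h ≤ n * h := by gcongr
    rw [mul_div_cancel₀ δ hn.ne'] at hkh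
    linarith
  rw [P.fwdDiff_iter_natDegree_eval hh.ne', Real.norm_eq_abs, ← mul_pow,
    mul_div_cancel₀ h two_ne_zero, abs_mul,
    abs_of_nonneg (by positivity : (0 : ℝ) ≤ n ! * h ^ n)] at hupper
  have hfact : (1 : ℝ) ≤ n ! := by exact_mod_cast n.factorial_pos
  have hlower : h ^ n ≤ n ! * h ^ n * |P.leadingCoeff| := by
    calc h ^ n = 1 * h ^ n * 1 := by ring
      _ ≤ n ! * h ^ n * |P.leadingCoeff| := by gcongr
  linarith

end Polynomial

theorem rpow_neg_sq_le {a q : ℝ} (ha : 0 < a) (h2 : 2 ≤ a ^ (q * (q - 1))) (m : ℕ) :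
    a ^ (-(((m : ℝ) * q) ^ 2)) ≤ (a ^ (-((m : ℝ) * q)) / (2 * m)) ^ m := by
  rcases Nat.eq_zero_or_pos m with rfl | hm
  · simp
  have hsplit : -(((m : ℝ) * q) ^ 2) = -((m : ℝ) * q) * m - q * (q - 1) * (m * m : ℕ) := by
    push_cast; ring
  have hm2 : ((2 * m : ℕ) : ℝ) ≤ 2 ^ m := by exact_mod_cast Nat.mul_le_pow (by norm_num) m
  rw [hsplit, Real.rpow_sub ha, Real.rpow_mul_natCast ha.le, Real.rpow_mul_natCast ha.le, div_pow]
  gcongr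
  calc (2 * (m : ℝ)) ^ m ≤ (2 ^ m) ^ m := by gcongr; exact_mod_cast hm2
    _ = 2 ^ (m * m) := by rw [← pow_mul]
    _ ≤ (a ^ (q * (q - 1))) ^ (m * m) := by gcongr

theorem two_le_rpow_mul_sub_one {a q : ℝ} (ha : 1 < a)
    (hq : 2 * (1 + Real.logb a 2 + Real.logb a 3) < q) : 2 ≤ a ^ (q * (q - 1)) := by
  have h2 : 0 < Real.logb a 2 := Real.logb_pos ha (by norm_num)
  have h3 : 0 < Real.logb a 3 := Real.logb_pos ha (by norm_num)
  rw [← Real.rpow_logb (by linarith) ha.ne' (by norm_num : (0 : ℝ) < 2),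
    Real.rpow_le_rpow_left_iff ha]
  nlinarith

theorem exists_abs_eq_of_abs_lt {f : ℝ → ℝ} (hf : Continuous f) {x δ ε : ℝ}
    (hgood : ∃ y ∈ Set.Icc (x - δ) x, ε ≤ |f y|) (hx : |f x| < ε) :
    ∃ c ∈ Set.Icc (x - δ) x, |f c| = ε := by
  obtain ⟨y, hy, hεy⟩ := hgood
  obtain ⟨c, hc, hfc⟩ := intermediate_value_Icc' hy.2 hf.abs.continuousOn ⟨hx.le, hεy⟩
  exact ⟨c, ⟨hy.1.trans hc.1, hc.2⟩, hfc⟩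

theorem exists_finset_intervals_cover {f : ℝ → ℝ} (hf : Continuous f) {a b δ ε : ℝ}
    (hgood : ∀ c, ∃ y ∈ Set.Icc c (c + δ), ε ≤ |f y|) (Z : Finset ℝ)
    (hZ : ∀ r ∈ Set.Icc a b, |f r| = ε → r ∈ Z) :
    ∃ S : Finset (ℝ × ℝ), S.card ≤ Z.card + 1 ∧ (∀ p ∈ S, p.2 - p.1 ≤ δ) ∧
      (∀ p ∈ S, Set.Icc p.1 p.2 ⊆ Set.Icc a b) ∧
      ∀ x ∈ Set.Icc a b, (∀ p ∈ S, x ∉ Set.Icc p.1 p.2) → ε ≤ |f x| := by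
  classical
  set I : ℝ → ℝ × ℝ := fun r => (r, min b (r + δ))
  refine ⟨insert (I a) ((Z.filter (a ≤ ·)).image I), ?_, ?_, ?_, ?_⟩
  · grw [card_insert_le, Finset.card_image_le, card_filter_le]
  · intro p hp
    obtain rfl | ⟨r, -, rfl⟩ := mem_insert.1 hp |>.imp_right mem_image.1
    all_goals exact sub_le_iff_le_add'.2 (min_le_right _ _)
  · intro p hp
    obtain rfl | ⟨r, hr, rfl⟩ := mem_insert.1 hp |>.imp_right mem_image.1
    · exact Set.Icc_subset_Icc le_rfl (min_le_left _ _)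
    · exact Set.Icc_subset_Icc (mem_filter.1 hr).2 (min_le_left _ _)
  · intro x hx hout
    by_contra! hsmall
    have hfar : a + δ < x := by
      by_contra! hnear
      exact hout (I a) (mem_insert_self _ _) ⟨hx.1, le_min hx.2 hnear⟩
    obtain ⟨c, hc, hfc⟩ := exists_abs_eq_of_abs_lt hf (by simpa using hgood (x - δ)) hsmall
    have hcZ : c ∈ Z := hZ c ⟨by linarith [hc.1], hc.2.trans hx.2⟩ hfc
    refine hout (I c) (mem_insert_of_mem (mem_image_of_mem I ?_)) ⟨hc.2, le_min hx.2 ?_⟩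
    · exact mem_filter.2 ⟨hcZ, by linarith [hc.1]⟩
    · linarith [hc.1]

theorem stmt4_general (k : ℕ) (a b : ℝ) (ha : 1 < a)
    (m : ℕ) (hm : 1 ≤ m) (P : Polynomial ℝ)
    (hdeg : P.natDegree = m) (hlead : 1 ≤ |P.coeff m|)
    (hsparse : P.support.card ≤ k)
    (q : ℝ) (hq : 2 * (1 + Real.logb a 2 + Real.logb a 3) < q) :
    ∃ S : Finset (ℝ × ℝ), S.card ≤ 2 * k + 2 ∧
      (∀ p ∈ S, p.2 - p.1 ≤ a ^ (-((m : ℝ) * q))) ∧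
      (∀ p ∈ S, Set.Icc p.1 p.2 ⊆ Set.Icc a b) ∧
      ∀ x ∈ Set.Icc a b, (∀ p ∈ S, x ∉ Set.Icc p.1 p.2) →
        a ^ (-(((m : ℝ) * q) ^ 2)) ≤ |P.eval x| := by
  classical
  have ha₀ : 0 < a := by linarith
  have hgood : ∀ c, ∃ y ∈ Set.Icc c (c + a ^ (-((m : ℝ) * q))),
      a ^ (-(((m : ℝ) * q) ^ 2)) ≤ |P.eval y| := fun c => by
    obtain ⟨y, hy, hPy⟩ := exists_mem_Icc_pow_le_abs_eval (hdeg ▸ hm)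
      (by rwa [leadingCoeff, hdeg]) c (Real.rpow_pos_of_pos ha₀ _)
    rw [hdeg] at hPy
    exact ⟨y, hy, (rpow_neg_sq_le ha₀ (two_le_rpow_mul_sub_one ha hq) m).trans hPy⟩
  set ε := a ^ (-(((m : ℝ) * q) ^ 2))
  have hne : ∀ s : ℝ, P + C s ≠ 0 := fun s hs => by
    have := congrArg (coeff · m) hs
    simp only [coeff_add, coeff_C, if_neg (by omega : m ≠ 0), add_zero, coeff_zero] at this
    norm_num [this] at hlead
  set Z := ((P + C ε).roots.toFinset ∪ (P + C (-ε)).roots.toFinset).filter (0 < ·)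
  have hZ : Z.card ≤ 2 * k + 1 := by
    simp only [Z, filter_union]
    grw [card_union_le, card_pos_roots_add_C_le (hne _),
      card_pos_roots_add_C_le (hne _)]
    omega
  have hroots : ∀ r ∈ Set.Icc a b, |P.eval r| = ε → r ∈ Z := fun r hr hPr => by
    refine mem_filter.2 ⟨mem_union.2 ?_, by linarith [hr.1]⟩
    rcases abs_eq (by positivity : 0 ≤ ε) |>.1 hPr with hPr | hPr
    · right; rw [Multiset.mem_toFinset, mem_roots (hne _)]; simp [hPr]
    · left; rw [Multiset.mem_toFinset, mem_roots (hne _)]; simp [hPr]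
  obtain ⟨S, hS, hlen, hsub, hcover⟩ :=
    exists_finset_intervals_cover P.continuous hgood Z hroots
  exact ⟨S, by omega, hlen, hsub, hcover⟩

/-- Small-value lemma: a degree-`m` polynomial with leading coefficient of absolute value
at least `1` and at most `k` nonzero coefficients is at least `a^{-(mq)²}` on `[a,b]`
outside at most `2k+2` intervals of length at most `a^{-mq}`. -/
theorem stmt4 (k : ℕ) (hk : 2 ≤ k) (a b : ℝ) (ha : 1 < a) (hab : a < b)
    (m : ℕ) (hm : 1 ≤ m) (P : Polynomial ℝ)
    (hdeg : P.natDegree = m) (hlead : 1 ≤ |P.coeff m|)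
    (hsparse : P.support.card ≤ k)
    (q : ℝ) (hq : 2 * (1 + Real.logb a 2 + Real.logb a 3) < q) :
    ∃ S : Finset (ℝ × ℝ), S.card ≤ 2 * k + 2 ∧
      (∀ p ∈ S, p.2 - p.1 ≤ a ^ (-((m : ℝ) * q))) ∧
      (∀ p ∈ S, Set.Icc p.1 p.2 ⊆ Set.Icc a b) ∧
      ∀ x ∈ Set.Icc a b, (∀ p ∈ S, x ∉ Set.Icc p.1 p.2) →
        a ^ (-(((m : ℝ) * q) ^ 2)) ≤ |P.eval x| :=
  stmt4_general k a b ha m hm P hdeg hlead hsparse q hq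
end
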